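/- Let w₅ := 7x⁶ ∂_x (equivalently w₅ = F^5_5 + 3x⁵(2x ∂_x + y ∂_y + z ∂_z)). Then the Lie bracket satisfies [w₅, F^2_3] = −21 x⁷ (y²+z²) (2x ∂_x + y ∂_y + z ∂_z), and this bracket has divergence −420 x⁷(y²+z²), which is not identically zero. In particular, although F^2_3 is divergence-free and possesses a nonconstant first integral, and w₅ possesses the nonconstant first integral y²+z², the Lie bracket [w₅, F^2_3] is not divergence-free. -/
import Mathlib


noncomputable section
open MvPolynomial

/-- Polynomial functions of the variables x, y, z (indexed `0, 1, 2`). -/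
abbrev Poly3 := MvPolynomial (Fin 3) ℝ

/-- Polynomial vector fields on ℝ³, given by their three components. -/
abbrev VF3 := Fin 3 → Poly3

/-- The derivation action `v(g) = v₁ ∂g/∂x + v₂ ∂g/∂y + v₃ ∂g/∂z`. -/
def applyVF (v : VF3) (g : Poly3) : Poly3 := ∑ i, v i * pderiv i g

/-- The Lie bracket `[v,w] := v∘w − w∘v`, with i-th component `v(wᵢ) − w(vᵢ)`. -/
def bracket (v w : VF3) : VF3 := fun i => applyVF v (w i) - applyVF w (v i)

/-- The divergence `div v = ∂v₁/∂x + ∂v₂/∂y + ∂v₃/∂z`. -/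
def divergence (v : VF3) : Poly3 := ∑ i, pderiv i (v i)

/-- The vector field `F^l_k := x^l (y²+z²)^{k−l} ((k−l+1) x ∂_x − ((l+1)/2) y ∂_y − ((l+1)/2) z ∂_z)`
for integers `−1 ≤ l ≤ k`; for `l = −1` the second and third components vanish and this is
`(k+2)(y²+z²)^{k+1} ∂_x`. -/
def Fvf (l k : ℤ) : VF3 :=
  ![C ((k - l + 1 : ℤ) : ℝ) * X 0 ^ (l + 1).toNat * (X 1 ^ 2 + X 2 ^ 2) ^ (k - l).toNat,
    C (-((l + 1 : ℤ) : ℝ) / 2) * X 0 ^ l.toNat * X 1 * (X 1 ^ 2 + X 2 ^ 2) ^ (k - l).toNat,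
    C (-((l + 1 : ℤ) : ℝ) / 2) * X 0 ^ l.toNat * X 2 * (X 1 ^ 2 + X 2 ^ 2) ^ (k - l).toNat]

/-- The vector field `Θ^m_n := x^m (y²+z²)^{n−m} (z ∂_y − y ∂_z)` for integers `0 ≤ m ≤ n`. -/
def Tvf (m n : ℤ) : VF3 :=
  ![0,
    X 0 ^ m.toNat * (X 1 ^ 2 + X 2 ^ 2) ^ (n - m).toNat * X 2,
    -(X 0 ^ m.toNat * (X 1 ^ 2 + X 2 ^ 2) ^ (n - m).toNat * X 1)]

/-- The vector field `w₅ := 7x⁶ ∂_x`. -/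
def w5 : VF3 := ![C 7 * X 0 ^ 6, 0, 0]

/-- The vector field `−21 x⁷ (y²+z²) (2x ∂_x + y ∂_y + z ∂_z)`. -/
def B12 : VF3 :=
  ![C (-42) * X 0 ^ 8 * (X 1 ^ 2 + X 2 ^ 2),
    C (-21) * X 0 ^ 7 * (X 1 ^ 2 + X 2 ^ 2) * X 1,
    C (-21) * X 0 ^ 7 * (X 1 ^ 2 + X 2 ^ 2) * X 2]

/-- `w₅ = 7x⁶∂_x = F^5_5 + 3x⁵(2x∂_x + y∂_y + z∂_z)` satisfies
`[w₅, F^2_3] = −21 x⁷(y²+z²)(2x∂_x + y∂_y + z∂_z)`, whose divergence is `−420x⁷(y²+z²) ≠ 0`;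
yet `F^2_3` is divergence-free with a nonconstant first integral, and `w₅` has the
nonconstant first integral `y²+z²`. -/
theorem bracket_not_divergence_free :
    w5 = (fun i => Fvf 5 5 i + (C 3 * X 0 ^ 5) * (![2 * X 0, X 1, X 2] i)) ∧
    bracket w5 (Fvf 2 3) = B12 ∧
    divergence B12 = C (-420) * X 0 ^ 7 * (X 1 ^ 2 + X 2 ^ 2) ∧
    divergence (bracket w5 (Fvf 2 3)) ≠ 0 ∧
    divergence (Fvf 2 3) = 0 ∧
    (∃ g : Poly3, applyVF (Fvf 2 3) g = 0 ∧ ∀ c : ℝ, g ≠ C c) ∧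
    applyVF w5 (X 1 ^ 2 + X 2 ^ 2) = 0 ∧
    ∀ c : ℝ, (X 1 ^ 2 + X 2 ^ 2 : Poly3) ≠ C c := by
  have hB : bracket w5 (Fvf 2 3) = B12 := by
    funext i
    fin_cases i <;>
      · apply MvPolynomial.funext
        intro x
        simp [bracket, applyVF, w5, Fvf, B12, Fin.sum_univ_three]
        ring
  have hdivB : divergence B12 = C (-420) * X 0 ^ 7 * (X 1 ^ 2 + X 2 ^ 2) := by
    apply MvPolynomial.funext
    intro x
    simp [divergence, B12, Fin.sum_univ_three]
    ring
  refine ⟨?_, hB, hdivB, ?_, ?_, ?_, ?_, ?_⟩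
  · funext i
    fin_cases i <;>
      · apply MvPolynomial.funext
        intro x
        simp [w5, Fvf]
        ring
  · rw [hB, hdivB]
    intro h
    have := congrArg (eval ![1, 1, 0]) h
    simp at this
  · apply MvPolynomial.funext
    intro x
    simp [divergence, Fvf, Fin.sum_univ_three]
    ring
  · refine ⟨X 0 ^ 3 * (X 1 ^ 2 + X 2 ^ 2) ^ 2, ?_, ?_⟩
    · apply MvPolynomial.funext
      intro x
      simp [applyVF, Fvf, Fin.sum_univ_three]
      ring
    · intro c h
      have h1 := congrArg (eval ![1, 1, 0]) h
      have h2 := congrArg (eval ![1, 2, 0]) h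
      simp at h1 h2
      linarith
  · apply MvPolynomial.funext
    intro x
    simp [applyVF, w5, Fin.sum_univ_three]
  · intro c h
    have h1 := congrArg (eval ![0, 1, 0]) h
    have h2 := congrArg (eval ![0, 0, 0]) h
    simp at h1 h2
    linarith
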